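/- For every u ∈ H with u ≥ 0, the set Ω = {u > 0} is an energy set, i.e. m(Ω ∖ {w_Ω > 0}) = 0. -/

import Mathlib

/-!
Write `w = w_Ω` and let `φ ∈ H₀(Ω)` with `0 ≤ φ ≤ 1`. For `0 < ε ≤ 1` the lattice competitor
`w ⊔ εφ` lies in `H₀(Ω)`. By (D4) its gradient energy exceeds that of `w` by at most
`ε² ∫ |Dφ|²`, while, since `t ↦ t - t²/2` is increasing on `(-∞, 1]`, its zero-order part improves
on that of `w` by at least `ε/2 ∫_{w ≤ 0} φ`. Minimality of `w` thus gives
`∫_{w ≤ 0} φ ≤ ε ∫ |Dφ|²` for all small `ε`, so `φ = 0` a.e. on `{w ≤ 0}`.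
The choice `φ = u ⊓ 1` gives the theorem.
-/

open MeasureTheory Filter
open scoped ENNReal

namespace AbsSob

variable {X : Type*} [MeasurableSpace X]

/-- Abstract Sobolev setting: a Riesz subspace `H` of `L²(X,m)` with the Stone
property (H1)-(H2), together with a gradient-like map `D` satisfying (D1)-(D4). -/
structure Setting (X : Type*) [MeasurableSpace X] (m : Measure X) where
  H : Set (X → ℝ)
  D : (X → ℝ) → X → ℝ
  zero_mem : (fun _ => (0 : ℝ)) ∈ H
  add_mem : ∀ ⦃u v : X → ℝ⦄, u ∈ H → v ∈ H → u + v ∈ H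
  smul_mem : ∀ (c : ℝ) ⦃u : X → ℝ⦄, u ∈ H → c • u ∈ H
  sup_mem : ∀ ⦃u v : X → ℝ⦄, u ∈ H → v ∈ H → u ⊔ v ∈ H
  inf_mem : ∀ ⦃u v : X → ℝ⦄, u ∈ H → v ∈ H → u ⊓ v ∈ H
  stone : ∀ ⦃u : X → ℝ⦄, u ∈ H → u ⊓ 1 ∈ H
  memL2 : ∀ ⦃u : X → ℝ⦄, u ∈ H → MemLp u 2 m
  gradL2 : ∀ ⦃u : X → ℝ⦄, u ∈ H → MemLp (D u) 2 m
  D1 : ∀ ⦃u : X → ℝ⦄, u ∈ H → ∀ᵐ x ∂m, 0 ≤ D u x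
  D2 : ∀ ⦃u v : X → ℝ⦄, u ∈ H → v ∈ H → ∀ᵐ x ∂m, D (u + v) x ≤ D u x + D v x
  D3 : ∀ (c : ℝ) ⦃u : X → ℝ⦄, u ∈ H → ∀ᵐ x ∂m, D (c • u) x = |c| * D u x
  D4 : ∀ ⦃u v : X → ℝ⦄, u ∈ H → v ∈ H → ∀ᵐ x ∂m,
      D (u ⊔ v) x = if v x < u x then D u x else D v x

variable {m : Measure X}

/-- Square of the `H`-norm: `‖u‖_H² = ‖u‖²_{L²} + ‖Du‖²_{L²}`. -/
noncomputable def normHsq (S : Setting X m) (u : X → ℝ) : ℝ :=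
  ∫ x, (u x) ^ 2 ∂m + ∫ x, (S.D u x) ^ 2 ∂m

/-- Sobolev functions vanishing (m-a.e.) outside `Ω`. -/
def H0 (S : Setting X m) (Ω : Set X) : Set (X → ℝ) :=
  {u | u ∈ S.H ∧ ∀ᵐ x ∂m, x ∉ Ω → u x = 0}

/-- The functional `F^{a,f}(u) = ½∫|Du|² + (a/2)∫u² − ∫ f u`. -/
noncomputable def F (S : Setting X m) (a : ℝ) (f : X → ℝ) (u : X → ℝ) : ℝ :=
  (1 / 2) * ∫ x, (S.D u x) ^ 2 ∂m + (a / 2) * ∫ x, (u x) ^ 2 ∂m - ∫ x, f x * u x ∂m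

/-- `w` is a minimizer of `F^{a,f}` over `H₀(Ω)`. -/
def IsMinimizer (S : Setting X m) (Ω : Set X) (a : ℝ) (f : X → ℝ) (w : X → ℝ) : Prop :=
  w ∈ H0 S Ω ∧ ∀ u ∈ H0 S Ω, F S a f w ≤ F S a f u

/-- (ℋ2): the inclusion `H ↪ L²` is compact. -/
def CompactEmbedding (S : Setting X m) : Prop :=
  ∀ u : ℕ → X → ℝ, (∀ n, u n ∈ S.H) → (∃ C : ℝ, ∀ n, normHsq S (u n) ≤ C) →
    ∃ (φ : ℕ → ℕ) (v : X → ℝ), StrictMono φ ∧ v ∈ S.H ∧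
      Tendsto (fun k => ∫ x, (u (φ k) x - v x) ^ 2 ∂m) atTop (nhds 0)

/-- (ℋ3): lower semicontinuity of the gradient energy along `L²`-convergent
`H`-bounded sequences, whose limit moreover belongs to `H`. -/
def GradLSC (S : Setting X m) : Prop :=
  ∀ (u : ℕ → X → ℝ) (v : X → ℝ), (∀ n, u n ∈ S.H) →
    (∃ C : ℝ, ∀ n, normHsq S (u n) ≤ C) →
    Tendsto (fun n => ∫ x, (u n x - v x) ^ 2 ∂m) atTop (nhds 0) →
    v ∈ S.H ∧ ∫ x, (S.D v x) ^ 2 ∂m ≤ liminf (fun n => ∫ x, (S.D (u n) x) ^ 2 ∂m) atTop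

/-- Energy sets: Borel sets coinciding up to an `m`-null set with `{w_Ω > 0}`. -/
def IsEnergySet (S : Setting X m) (Ω : Set X) : Prop :=
  MeasurableSet Ω ∧ ∃ w, IsMinimizer S Ω 1 (fun _ => 1) w ∧ m (Ω \ {x | 0 < w x}) = 0

open Topology

variable {S : Setting X m}

theorem Setting.integrable_D_sq {u : X → ℝ} (hu : u ∈ S.H) :
    Integrable (fun x => S.D u x ^ 2) m :=
  (S.gradL2 hu).integrable_sq

theorem Setting.integral_D_sup_sq_le {u v : X → ℝ} (hu : u ∈ S.H) (hv : v ∈ S.H) :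
    ∫ x, S.D (u ⊔ v) x ^ 2 ∂m ≤ ∫ x, S.D u x ^ 2 ∂m + ∫ x, S.D v x ^ 2 ∂m := by
  rw [← integral_add (S.integrable_D_sq hu) (S.integrable_D_sq hv)]
  refine integral_mono_ae (S.integrable_D_sq (S.sup_mem hu hv))
    ((S.integrable_D_sq hu).add (S.integrable_D_sq hv)) ?_
  filter_upwards [S.D4 hu hv] with x hsup
  rw [hsup]
  split_ifs
  · exact le_add_of_nonneg_right (sq_nonneg _)
  · exact le_add_of_nonneg_left (sq_nonneg _)

theorem Setting.integral_D_smul_sq (c : ℝ) {u : X → ℝ} (hu : u ∈ S.H) :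
    ∫ x, S.D (c • u) x ^ 2 ∂m = c ^ 2 * ∫ x, S.D u x ^ 2 ∂m := by
  rw [← integral_const_mul]
  refine integral_congr_ae ?_
  filter_upwards [S.D3 c hu] with x hx
  rw [hx, mul_pow, sq_abs]

theorem sup_mem_H0 {Ω : Set X} {u v : X → ℝ} (hu : u ∈ H0 S Ω) (hv : v ∈ H0 S Ω) :
    u ⊔ v ∈ H0 S Ω := by
  refine ⟨S.sup_mem hu.1 hv.1, ?_⟩
  filter_upwards [hu.2, hv.2] with x hux hvx hx
  simp [hux hx, hvx hx]

theorem smul_mem_H0 (c : ℝ) {Ω : Set X} {u : X → ℝ} (hu : u ∈ H0 S Ω) : c • u ∈ H0 S Ω := by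
  refine ⟨S.smul_mem c hu.1, ?_⟩
  filter_upwards [hu.2] with x hux hx
  simp [hux hx]

theorem F_one_one_eq [IsFiniteMeasure m] {u : X → ℝ} (hu : u ∈ S.H) :
    F S 1 (fun _ => 1) u = 1 / 2 * ∫ x, S.D u x ^ 2 ∂m - ∫ x, (u x - u x ^ 2 / 2) ∂m := by
  rw [F, integral_sub ((S.memL2 hu).integrable one_le_two)
    ((S.memL2 hu).integrable_sq.div_const 2), integral_div]
  simp only [one_mul]
  ring

theorem ite_nonpos_le_sub_half_sq_max {a w : ℝ} (ha0 : 0 ≤ a) (ha1 : a ≤ 1) :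
    (if w ≤ 0 then a / 2 else 0) ≤ (max w a - max w a ^ 2 / 2) - (w - w ^ 2 / 2) := by
  rcases le_total a w with haw | hwa
  · rw [max_eq_left haw]
    split_ifs <;> linarith
  · rw [max_eq_right hwa]
    split_ifs <;> nlinarith

section Minimizer

variable [IsFiniteMeasure m] {Ω : Set X} {w φ : X → ℝ}

theorem integral_indicator_nonpos_le_of_isMinimizer (hw : IsMinimizer S Ω 1 (fun _ => 1) w)
    (hφ : φ ∈ H0 S Ω) (hφ0 : ∀ᵐ x ∂m, 0 ≤ φ x) (hφ1 : ∀ᵐ x ∂m, φ x ≤ 1)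
    {ε : ℝ} (hε : 0 < ε) (hε1 : ε ≤ 1) :
    ∫ x, {x | w x ≤ 0}.indicator φ x ∂m ≤ ε * ∫ x, S.D φ x ^ 2 ∂m := by
  set v := w ⊔ ε • φ
  have hv : v ∈ H0 S Ω := sup_mem_H0 hw.1 (smul_mem_H0 ε hφ)
  have hgrad : ∫ x, S.D v x ^ 2 ∂m ≤ ∫ x, S.D w x ^ 2 ∂m + ε ^ 2 * ∫ x, S.D φ x ^ 2 ∂m := by
    simpa only [S.integral_D_smul_sq ε hφ.1] using
      S.integral_D_sup_sq_le hw.1.1 (S.smul_mem ε hφ.1)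
  have henergy := hw.2 v hv
  rw [F_one_one_eq hw.1.1, F_one_one_eq hv.1] at henergy
  have hint : ∀ {f}, f ∈ S.H → Integrable (fun x => f x - f x ^ 2 / 2) m := fun hf =>
    ((S.memL2 hf).integrable one_le_two).sub ((S.memL2 hf).integrable_sq.div_const 2)
  have hgain : ε / 2 * ∫ x, {x | w x ≤ 0}.indicator φ x ∂m ≤
      ∫ x, (v x - v x ^ 2 / 2) ∂m - ∫ x, (w x - w x ^ 2 / 2) ∂m := by
    rw [← integral_const_mul, ← integral_sub (hint hv.1) (hint hw.1.1)]
    refine integral_mono_of_nonneg ?_ ((hint hv.1).sub (hint hw.1.1)) ?_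
    · filter_upwards [hφ0] with x hx
      exact mul_nonneg (by positivity) (Set.indicator_nonneg (fun _ _ => hx) x)
    · filter_upwards [hφ0, hφ1] with x h0 h1
      have := ite_nonpos_le_sub_half_sq_max (w := w x) (mul_nonneg hε.le h0)
        (mul_le_one₀ hε1 h0 h1)
      refine le_trans (le_of_eq ?_) this
      simp only [Set.indicator_apply, Set.mem_ofPred_eq]
      split_ifs <;> ring
  refine le_of_mul_le_mul_left (a := ε / 2) ?_ (by positivity)
  nlinarith

theorem ae_pos_of_isMinimizer (hw : IsMinimizer S Ω 1 (fun _ => 1) w) (hφ : φ ∈ H0 S Ω)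
    (hφ0 : ∀ᵐ x ∂m, 0 ≤ φ x) (hφ1 : ∀ᵐ x ∂m, φ x ≤ 1) :
    ∀ᵐ x ∂m, 0 < φ x → 0 < w x := by
  set s := {x | w x ≤ 0}
  have hs : NullMeasurableSet s m :=
    nullMeasurableSet_le (S.memL2 hw.1.1).aestronglyMeasurable.aemeasurable aemeasurable_const
  have hint : Integrable (s.indicator φ) m :=
    ((S.memL2 hφ.1).integrable one_le_two).indicator₀ hs
  have hnonneg : 0 ≤ᵐ[m] s.indicator φ := by
    filter_upwards [hφ0] with x hx
    exact Set.indicator_nonneg (fun _ _ => hx) x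
  have hle : ∫ x, s.indicator φ x ∂m ≤ 0 := by
    have hlim : Tendsto (fun ε : ℝ => ε * ∫ x, S.D φ x ^ 2 ∂m) (𝓝[>] 0) (𝓝 0) :=
      tendsto_nhdsWithin_of_tendsto_nhds ((continuous_mul_const _).tendsto' 0 0 (zero_mul _))
    refine ge_of_tendsto hlim ?_
    filter_upwards [Ioc_mem_nhdsGT one_pos] with ε hε
    exact integral_indicator_nonpos_le_of_isMinimizer hw hφ hφ0 hφ1 hε.1 hε.2
  have hzero := (integral_eq_zero_iff_of_nonneg_ae hnonneg hint).1
    (le_antisymm hle (integral_nonneg_of_ae hnonneg))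
  filter_upwards [hzero] with x hx hφx
  by_contra hwx
  rw [Pi.zero_apply, Set.indicator_of_mem (show x ∈ s from not_lt.1 hwx)] at hx
  exact hφx.ne' hx

end Minimizer

theorem statement_12_general {X : Type*} [MeasurableSpace X] {m : Measure X} [IsFiniteMeasure m]
    (S : Setting X m)
    {u : X → ℝ} (hu : u ∈ S.H) (hu0 : ∀ᵐ x ∂m, 0 ≤ u x)
    {w : X → ℝ} (hw : IsMinimizer S {x | 0 < u x} 1 (fun _ => 1) w) :
    m ({x | 0 < u x} \ {x | 0 < w x}) = 0 := by
  have hφ : u ⊓ 1 ∈ H0 S {x | 0 < u x} := by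
    refine ⟨S.stone hu, ?_⟩
    filter_upwards [hu0] with x hx hxΩ
    simp [le_antisymm (not_lt.1 hxΩ) hx]
  have hpos := ae_pos_of_isMinimizer hw hφ
    (by filter_upwards [hu0] with x hx using le_min hx zero_le_one)
    (ae_of_all _ fun x => min_le_right (u x) 1)
  refine measure_mono_null (fun x hx => ?_) (ae_iff.mp hpos)
  exact fun h => hx.2 (h (lt_min hx.1 one_pos))

/-- for every nonnegative `u ∈ H`, the set `{u > 0}` is an energy set,
i.e. `m({u > 0} ∖ {w_{u>0} > 0}) = 0`. -/
theorem statement_12 {X : Type*} [MeasurableSpace X] {m : Measure X} [IsFiniteMeasure m]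
    (S : Setting X m) (hcpt : CompactEmbedding S) (hlsc : GradLSC S)
    {u : X → ℝ} (hu : u ∈ S.H) (hu0 : ∀ᵐ x ∂m, 0 ≤ u x)
    {w : X → ℝ} (hw : IsMinimizer S {x | 0 < u x} 1 (fun _ => 1) w) :
    m ({x | 0 < u x} \ {x | 0 < w x}) = 0 :=
  statement_12_general S hu hu0 hw

end AbsSob
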